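/- Let 𝔻 be the unit disc with Poincaré distance k_𝔻, let ξ ∈ ∂𝔻, and let γ(t) = tξ, t ∈ [0,1), be the radius toward ξ. Suppose ζ : [0,+∞) → 𝔻 is a curve with ζ(t) → ξ as t → +∞ and lim_{t→+∞} k_𝔻(ζ(t), γ([0,1))) = 0. Then ζ(t) converges orthogonally to ξ, i.e. arg(1 − conj(ξ)·ζ(t)) → 0 as t → +∞. -/

import Mathlib

/-!
Rotating by `conj ξ` reduces everything to the radius `[0, 1)`. If `w` lies at hyperbolic
distance `k` from the real point `r ∈ [0, 1)`, its Möbius image `q = (w - r) / (1 - r w)` has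
`‖q‖ = tanh k`, and `1 - w = (1 - r) · (1 - q) / (1 + r q)`. Since `1 - r > 0`, the argument
of `1 - w` is that of `(1 - q) / (1 + r q)`, which tends to `1` as `q → 0`, uniformly in `r`.
-/

open Complex Set Real Filter Topology

/-- The Poincaré (hyperbolic) distance of the unit disc:
`k_𝔻(z,w) = arctanh|(z−w)/(1−conj(w)·z)| = (1/2)·log((1+m)/(1−m))`
where `m = |(z−w)/(1−conj(w)·z)|`. -/
noncomputable def kD (z w : ℂ) : ℝ :=
  Real.log ((1 + ‖(z - w) / (1 - (starRingEnd ℂ) w * z)‖) /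
    (1 - ‖(z - w) / (1 - (starRingEnd ℂ) w * z)‖)) / 2

open ComplexConjugate

lemma norm_sub_lt_norm_one_sub_conj_mul {a b : ℂ} (ha : ‖a‖ < 1) (hb : ‖b‖ < 1) :
    ‖a - b‖ < ‖1 - conj b * a‖ := by
  have ha' : normSq a < 1 := by rw [← Complex.sq_norm]; nlinarith [norm_nonneg a]
  have hb' : normSq b < 1 := by rw [← Complex.sq_norm]; nlinarith [norm_nonneg b]
  rw [norm_def, norm_def]
  apply Real.sqrt_lt_sqrt (normSq_nonneg _)
  simp only [normSq_apply, sub_re, sub_im, mul_re, mul_im, one_re, one_im, conj_re,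
    conj_im] at *
  -- `|1 - b̄a|² - |a - b|² = (1 - |a|²)(1 - |b|²)`
  nlinarith [mul_pos (sub_pos.2 ha') (sub_pos.2 hb')]

lemma norm_mobius_lt_one {a b : ℂ} (ha : ‖a‖ < 1) (hb : ‖b‖ < 1) :
    ‖(a - b) / (1 - conj b * a)‖ < 1 := by
  have h := norm_sub_lt_norm_one_sub_conj_mul ha hb
  rw [norm_div, div_lt_one ((norm_nonneg _).trans_lt h)]
  exact h

lemma kD_eq_artanh {a b : ℂ} (ha : ‖a‖ < 1) (hb : ‖b‖ < 1) :
    kD a b = Real.artanh ‖(a - b) / (1 - conj b * a)‖ := by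
  have h := norm_mobius_lt_one ha hb
  rw [Real.artanh_eq_half_log ⟨by linarith [norm_nonneg ((a - b) / (1 - conj b * a))], h.le⟩,
    kD, one_div_mul_eq_div]

lemma kD_nonneg {a b : ℂ} (ha : ‖a‖ < 1) (hb : ‖b‖ < 1) : 0 ≤ kD a b := by
  rw [kD_eq_artanh ha hb]
  exact Real.artanh_nonneg (norm_nonneg _)

lemma tanh_kD {a b : ℂ} (ha : ‖a‖ < 1) (hb : ‖b‖ < 1) :
    Real.tanh (kD a b) = ‖(a - b) / (1 - conj b * a)‖ := by
  rw [kD_eq_artanh ha hb, Real.tanh_artanh]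
  exact ⟨by linarith [norm_nonneg ((a - b) / (1 - conj b * a))], norm_mobius_lt_one ha hb⟩

lemma kD_mul_left {ξ : ℂ} (hξ : ‖ξ‖ = 1) (a b : ℂ) : kD (ξ * a) (ξ * b) = kD a b := by
  have hconj : conj ξ * ξ = 1 := by
    rw [conj_mul', hξ]
    norm_num
  have hmobius : (ξ * a - ξ * b) / (1 - conj (ξ * b) * (ξ * a))
      = ξ * ((a - b) / (1 - conj b * a)) := by
    rw [map_mul, mul_div_assoc', show conj ξ * conj b * (ξ * a) = conj ξ * ξ * (conj b * a) by
      ring, hconj, one_mul, mul_sub]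
  simp only [kD, hmobius, norm_mul, hξ, one_mul]

lemma Real.continuous_tanh : Continuous Real.tanh := by
  rw [show Real.tanh = fun x => Real.sinh x / Real.cosh x from funext Real.tanh_eq_sinh_div_cosh]
  exact Real.continuous_sinh.div Real.continuous_cosh fun x => (Real.cosh_pos x).ne'

lemma one_sub_mobius_div_eq {w : ℂ} {r : ℝ} (hw : 1 - r * w ≠ 0) (hr : r ≠ -1) :
    (1 - (w - r) / (1 - r * w)) / (1 + r * ((w - r) / (1 - r * w))) = (1 - w) / (1 - r) := by
  have hr' : (1 : ℂ) + r ≠ 0 := by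
    intro h
    exact hr (by exact_mod_cast eq_neg_of_add_eq_zero_right h)
  have hnum : 1 - (w - r) / (1 - r * w) = (1 + r) * (1 - w) / (1 - r * w) := by
    rw [eq_div_iff hw, sub_mul, div_mul_cancel₀ _ hw]
    ring
  have hden : 1 + r * ((w - r) / (1 - r * w)) = (1 + r) * (1 - r) / (1 - r * w) := by
    rw [eq_div_iff hw, add_mul, mul_assoc, div_mul_cancel₀ _ hw]
    ring
  rw [hnum, hden, div_div_div_cancel_right₀ hw, mul_div_mul_left _ _ hr']

lemma arg_one_sub_eq_arg_mobius {w : ℂ} {r : ℝ} (hw : ‖w‖ < 1) (hr : r ∈ Ioo (-1 : ℝ) 1) :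
    arg (1 - w) = arg ((1 - (w - r) / (1 - r * w)) / (1 + r * ((w - r) / (1 - r * w)))) := by
  have hrw : 1 - r * w ≠ 0 := by
    intro h
    have := norm_sub_lt_norm_one_sub_conj_mul hw (b := r) (by simpa [abs_lt] using hr)
    rw [conj_ofReal, h, norm_zero] at this
    exact (norm_nonneg _).not_gt this
  rw [one_sub_mobius_div_eq hrw hr.1.ne', div_eq_mul_inv, ← ofReal_one,
    ← ofReal_sub, ← ofReal_inv, arg_mul_real (inv_pos.2 (sub_pos.2 hr.2)), ofReal_one]

theorem tendsto_arg_one_sub_of_tendsto_kD {α : Type*} {l : Filter α} {w : α → ℂ} {r : α → ℝ}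
    (hw : ∀ t, ‖w t‖ < 1) (hr : ∀ t, r t ∈ Ioo (-1 : ℝ) 1)
    (hk : Tendsto (fun t => kD (w t) (r t)) l (𝓝 0)) :
    Tendsto (fun t => arg (1 - w t)) l (𝓝 0) := by
  set q : α → ℂ := fun t => (w t - r t) / (1 - r t * w t)
  have hrD : ∀ t, ‖(r t : ℂ)‖ < 1 := fun t => by simpa [abs_lt] using hr t
  have hq : Tendsto q l (𝓝 0) := by
    rw [tendsto_zero_iff_norm_tendsto_zero]
    simpa only [Function.comp_def, Real.tanh_zero, tanh_kD (hw _) (hrD _), conj_ofReal] using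
      (Real.continuous_tanh.tendsto 0).comp hk
  have hrq : Tendsto (fun t => (r t : ℂ) * q t) l (𝓝 0) := by
    refine squeeze_zero_norm (fun t => ?_) (tendsto_norm_zero.comp hq)
    rw [norm_mul]
    exact mul_le_of_le_one_left (norm_nonneg _) (hrD t).le
  have hlim : Tendsto (fun t => (1 - q t) / (1 + r t * q t)) l (𝓝 1) := by
    have := ((tendsto_const_nhds (x := (1 : ℂ))).sub hq).div (tendsto_const_nhds.add hrq)
      (by norm_num : (1 : ℂ) + 0 ≠ 0)
    rwa [sub_zero, add_zero, div_one] at this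
  have harg := (continuousAt_arg one_mem_slitPlane).tendsto.comp hlim
  rw [arg_one] at harg
  exact harg.congr fun t => (arg_one_sub_eq_arg_mobius (hw t) (hr t)).symm

lemma exists_tendsto_of_tendsto_sInf_image {β : Type*} {f : ℝ → β → ℝ} {S : Set β}
    (hS : S.Nonempty) (hf : ∀ t, ∀ x ∈ S, 0 ≤ f t x)
    (h : Tendsto (fun t => sInf (f t '' S)) atTop (𝓝 0)) :
    ∃ r : ℝ → β, (∀ t, r t ∈ S) ∧ Tendsto (fun t => f t (r t)) atTop (𝓝 0) := by
  have hnear : ∀ t, ∃ x ∈ S, f t x < sInf (f t '' S) + Real.exp (-t) := fun t => by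
    have hbdd : BddBelow (f t '' S) := ⟨0, forall_mem_image.2 (hf t)⟩
    obtain ⟨_, ⟨x, hx, rfl⟩, hlt⟩ :=
      (csInf_lt_iff hbdd (hS.image _)).1 (lt_add_of_pos_right _ (Real.exp_pos (-t)))
    exact ⟨x, hx, hlt⟩
  choose r hrS hr using hnear
  refine ⟨r, hrS, squeeze_zero (fun t => hf t _ (hrS t)) (fun t => (hr t).le) ?_⟩
  simpa using h.add Real.tendsto_exp_neg_atTop_nhds_zero

theorem stmt_18_general (ξ : ℂ) (hξ : ‖ξ‖ = 1) (ζ : ℝ → ℂ)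
    (hζ : ∀ t : ℝ, ‖ζ t‖ < 1)
    (hdist : Filter.Tendsto
      (fun t => sInf ((fun r : ℝ => kD (ζ t) ((r : ℂ) * ξ)) '' Set.Ico 0 1))
      Filter.atTop (nhds 0)) :
    Filter.Tendsto (fun t => Complex.arg (1 - (starRingEnd ℂ) ξ * ζ t))
      Filter.atTop (nhds 0) := by
  have hradius : ∀ r ∈ Ico (0 : ℝ) 1, ‖(r : ℂ) * ξ‖ < 1 := fun r hr => by
    simpa [hξ, abs_of_nonneg hr.1] using hr.2
  obtain ⟨r, hr, hk⟩ := exists_tendsto_of_tendsto_sInf_image ⟨0, by simp⟩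
    (fun t x hx => kD_nonneg (hζ t) (hradius x hx)) hdist
  have hrotate : ∀ t, ξ * (conj ξ * ζ t) = ζ t := fun t => by
    rw [← mul_assoc, mul_conj', hξ]
    norm_num
  refine tendsto_arg_one_sub_of_tendsto_kD (fun t => ?_)
    (fun t => Ico_subset_Ioo_left neg_one_lt_zero (hr t)) ?_
  · simpa [hξ] using hζ t
  · refine hk.congr fun t => ?_
    rw [← kD_mul_left hξ (conj ξ * ζ t), hrotate, mul_comm ξ]

/-- If a curve `ζ(t)` in `𝔻` tends to `ξ ∈ ∂𝔻` and its hyperbolic distance to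
the radius `γ(t) = tξ` tends to `0`, then `ζ(t)` converges orthogonally to `ξ`. -/
theorem stmt_18 (ξ : ℂ) (hξ : ‖ξ‖ = 1) (ζ : ℝ → ℂ)
    (hζ : ∀ t : ℝ, ‖ζ t‖ < 1)
    (hlim : Filter.Tendsto ζ Filter.atTop (nhds ξ))
    (hdist : Filter.Tendsto
      (fun t => sInf ((fun r : ℝ => kD (ζ t) ((r : ℂ) * ξ)) '' Set.Ico 0 1))
      Filter.atTop (nhds 0)) :
    Filter.Tendsto (fun t => Complex.arg (1 - (starRingEnd ℂ) ξ * ζ t))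
      Filter.atTop (nhds 0) :=
  stmt_18_general ξ hξ ζ hζ hdist
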